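/- Let ψ₁, ψ₂ be differentiable complex-valued functions of a real parameter λ with ρ = |ψ₁|² + |ψ₂|² > 0, and set Ψ(λ) = ρ^{-1/2}[[ψ₁, ψ₂],[-conj(ψ₂), conj(ψ₁)]]. Then the (1,1)-entry of (dΨ/dλ)·Ψ⁻¹ equals (1/2ρ)·(|ψ₁|²·(d/dλ)log(ψ₁/conj(ψ₁)) + |ψ₂|²·(d/dλ)log(ψ₂/conj(ψ₂))). -/

import Mathlib

open Matrix Complex
open ComplexConjugate

/-!
Write `Ψ = c • M` with `c = ρ^(-1/2)` and `M = !![ψ₁, ψ₂; -ψ̄₂, ψ̄₁]`. Since `M M^* = ρ`, the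
inverse is `Ψ⁻¹ = c • M^*`, so the `(1,1)`-entry of `Ψ' Ψ⁻¹` is
`c c' ρ + (ψ₁' ψ̄₁ + ψ₂' ψ̄₂) / ρ = (-ρ' / 2 + ψ₁' ψ̄₁ + ψ₂' ψ̄₂) / ρ`.
With `ρ' = Σ (ψᵢ' ψ̄ᵢ + ψᵢ ψ̄ᵢ')` this is `(1 / 2ρ) Σ (ψᵢ' ψ̄ᵢ - ψᵢ ψ̄ᵢ')`, and each summand is
`|ψᵢ|² (log (ψᵢ / ψ̄ᵢ))'`.
-/

theorem Complex.ofReal_inner (z w : ℂ) :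
    (inner ℝ z w : ℂ) = (w * conj z + z * conj w) / 2 := by
  rw [Complex.inner, re_eq_add_conj]
  simp only [map_mul, conj_conj]
  ring

theorem Complex.ofReal_norm_sq_add_norm_sq (a b : ℂ) :
    ((‖a‖ ^ 2 + ‖b‖ ^ 2 : ℝ) : ℂ) = a * conj a + b * conj b := by
  rw [mul_conj, mul_conj, normSq_eq_norm_sq, normSq_eq_norm_sq]
  push_cast
  rfl

theorem HasDerivAt.ofReal_sqrt_norm_sq_add_inv {f g : ℝ → ℂ} {f' g' : ℂ} {x : ℝ}
    (hf : HasDerivAt f f' x) (hg : HasDerivAt g g' x) (hx : 0 < ‖f x‖ ^ 2 + ‖g x‖ ^ 2) :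
    HasDerivAt (fun t => ((√(‖f t‖ ^ 2 + ‖g t‖ ^ 2) : ℂ))⁻¹)
      (-(f' * conj (f x) + f x * conj f' + g' * conj (g x) + g x * conj g')
        / (2 * (√(‖f x‖ ^ 2 + ‖g x‖ ^ 2) : ℂ) ^ 3)) x := by
  have hs : (√(‖f x‖ ^ 2 + ‖g x‖ ^ 2) : ℂ) ≠ 0 := by exact_mod_cast (Real.sqrt_pos.2 hx).ne'
  refine (((hf.norm_sq.fun_add hg.norm_sq).sqrt hx.ne').ofReal_comp.inv hs).congr_deriv ?_
  push_cast [ofReal_inner]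
  field_simp
  ring

theorem norm_sq_mul_logDeriv_div_conj {f : ℝ → ℂ} {x : ℝ} (hf : DifferentiableAt ℝ f x) :
    (‖f x‖ ^ 2 : ℂ) * logDeriv (fun t => f t / conj (f t)) x
      = deriv f x * conj (f x) - f x * conj (deriv f x) := by
  by_cases hx : f x = 0
  · simp [hx]
  have hcx : conj (f x) ≠ 0 := (map_ne_zero _).2 hx
  have hconj : HasDerivAt (fun t => conj (f t)) (conj (deriv f x)) x := hf.hasDerivAt.star
  rw [logDeriv_apply, (hf.hasDerivAt.fun_div hconj hcx).deriv, ← ofReal_pow,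
    ← Complex.normSq_eq_norm_sq, ← mul_conj]
  field_simp

theorem inv_smul_frame (r a b : ℂ) (h : r * conj r * (a * conj a + b * conj b) = 1) :
    (r • !![a, b; -conj b, conj a])⁻¹ = conj r • !![conj a, -b; conj b, a] := by
  apply inv_eq_right_inv
  ext i j
  fin_cases i <;> fin_cases j <;> simp [Matrix.mul_apply, Fin.sum_univ_two] <;>
    first | ring1 | linear_combination h

theorem inv_sqrt_smul_frame {ρ : ℝ} {a b : ℂ} (hρ : ρ = ‖a‖ ^ 2 + ‖b‖ ^ 2) :
    ((√ρ : ℂ)⁻¹ • !![a, b; -conj b, conj a])⁻¹ = (√ρ : ℂ)⁻¹ • !![conj a, -b; conj b, a] := by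
  rcases (show 0 ≤ ρ by rw [hρ]; positivity).eq_or_lt with rfl | hpos
  · simp
  have hs : (√ρ : ℂ) ≠ 0 := by exact_mod_cast (Real.sqrt_pos.2 hpos).ne'
  have hs2 : (√ρ : ℂ) ^ 2 = a * conj a + b * conj b := by
    rw [← ofReal_pow, Real.sq_sqrt hpos.le, hρ, ofReal_norm_sq_add_norm_sq]
  rw [inv_smul_frame, map_inv₀, conj_ofReal]
  rw [map_inv₀, conj_ofReal, ← hs2]
  field_simp

theorem frame_log_deriv_entry_11_general
    (ψ₁ ψ₂ : ℝ → ℂ)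
    (h₁ : Differentiable ℝ ψ₁) (h₂ : Differentiable ℝ ψ₂)
    (ρ : ℝ → ℝ) (hρ : ∀ l, ρ l = ‖ψ₁ l‖ ^ 2 + ‖ψ₂ l‖ ^ 2)
    (Ψ : ℝ → Matrix (Fin 2) (Fin 2) ℂ)
    (hΨ : ∀ l, Ψ l = ((Real.sqrt (ρ l))⁻¹ : ℂ) •
      !![ψ₁ l, ψ₂ l; -(starRingEnd ℂ) (ψ₂ l), (starRingEnd ℂ) (ψ₁ l)]) :
    ∀ l : ℝ,
      (Matrix.of (fun i j => deriv (fun x => Ψ x i j) l) * (Ψ l)⁻¹) 0 0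
        = (1 / (2 * (ρ l : ℂ))) *
          ((‖ψ₁ l‖ ^ 2 : ℂ) *
              (deriv (fun x => ψ₁ x / (starRingEnd ℂ) (ψ₁ x)) l /
                (ψ₁ l / (starRingEnd ℂ) (ψ₁ l)))
            + (‖ψ₂ l‖ ^ 2 : ℂ) *
              (deriv (fun x => ψ₂ x / (starRingEnd ℂ) (ψ₂ x)) l /
                (ψ₂ l / (starRingEnd ℂ) (ψ₂ l)))) := by
  intro l
  rcases (show 0 ≤ ρ l by rw [hρ]; positivity).eq_or_lt with hρ0 | hρpos
  · -- junk values: `Ψ l = 0` since `(√0)⁻¹ = 0`, and `1 / (2 * 0) = 0`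
    simp [hΨ, ← hρ0]
  have hs : (√(ρ l) : ℂ) ^ 2 = ψ₁ l * conj (ψ₁ l) + ψ₂ l * conj (ψ₂ l) := by
    rw [← ofReal_pow, Real.sq_sqrt hρpos.le, hρ, ofReal_norm_sq_add_norm_sq]
  have hs0 : (√(ρ l) : ℂ) ≠ 0 := by exact_mod_cast (Real.sqrt_pos.2 hρpos).ne'
  have hc := (h₁ l).hasDerivAt.ofReal_sqrt_norm_sq_add_inv (h₂ l).hasDerivAt (hρ l ▸ hρpos)
  simp only [← hρ] at hc
  have hΨ₀ : (fun x => Ψ x 0 0) = fun x => (√(ρ x) : ℂ)⁻¹ * ψ₁ x := by funext x; simp [hΨ]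
  have hΨ₁ : (fun x => Ψ x 0 1) = fun x => (√(ρ x) : ℂ)⁻¹ * ψ₂ x := by funext x; simp [hΨ]
  rw [mul_apply, Fin.sum_univ_two, hΨ, inv_sqrt_smul_frame (hρ l)]
  simp only [of_apply, Matrix.smul_apply, smul_eq_mul, cons_val_zero, cons_val_one]
  rw [hΨ₀, hΨ₁, (hc.fun_mul (h₁ l).hasDerivAt).deriv, (hc.fun_mul (h₂ l).hasDerivAt).deriv,
    ← logDeriv_apply, ← logDeriv_apply, norm_sq_mul_logDeriv_div_conj (h₁ l),
    norm_sq_mul_logDeriv_div_conj (h₂ l)]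
  rw [show (ρ l : ℂ) = (√(ρ l) : ℂ) ^ 2 by rw [hs, hρ, ofReal_norm_sq_add_norm_sq]]
  field_simp
  rw [hs]
  ring

/-- The (1,1)-entry of the logarithmic derivative of the normalized frame. -/
theorem frame_log_deriv_entry_11
    (ψ₁ ψ₂ : ℝ → ℂ)
    (h₁ : Differentiable ℝ ψ₁) (h₂ : Differentiable ℝ ψ₂)
    (h₁0 : ∀ l, ψ₁ l ≠ 0) (h₂0 : ∀ l, ψ₂ l ≠ 0)
    (ρ : ℝ → ℝ) (hρ : ∀ l, ρ l = ‖ψ₁ l‖ ^ 2 + ‖ψ₂ l‖ ^ 2)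
    (Ψ : ℝ → Matrix (Fin 2) (Fin 2) ℂ)
    (hΨ : ∀ l, Ψ l = ((Real.sqrt (ρ l))⁻¹ : ℂ) •
      !![ψ₁ l, ψ₂ l; -(starRingEnd ℂ) (ψ₂ l), (starRingEnd ℂ) (ψ₁ l)]) :
    ∀ l : ℝ,
      (Matrix.of (fun i j => deriv (fun x => Ψ x i j) l) * (Ψ l)⁻¹) 0 0
        = (1 / (2 * (ρ l : ℂ))) *
          ((‖ψ₁ l‖ ^ 2 : ℂ) *
              (deriv (fun x => ψ₁ x / (starRingEnd ℂ) (ψ₁ x)) l /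
                (ψ₁ l / (starRingEnd ℂ) (ψ₁ l)))
            + (‖ψ₂ l‖ ^ 2 : ℂ) *
              (deriv (fun x => ψ₂ x / (starRingEnd ℂ) (ψ₂ x)) l /
                (ψ₂ l / (starRingEnd ℂ) (ψ₂ l)))) :=
  frame_log_deriv_entry_11_general ψ₁ ψ₂ h₁ h₂ ρ hρ Ψ hΨ
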